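/- arXiv:1905.06003 — 4 statements merged into one kernel-verified Lean document; each statement's English description precedes it below -/
import Mathlib

section
/- For every real c > 0 and all non-negative integers x, y, there exist a probability space, a filtration {F_n}, and a martingale {X_n}_{n≥0} adapted to {F_n} satisfying |X_{m+1} - X_m| ≤ c almost surely for every m ≥ 0, such that for every non-negative integer m, P(X_m - X_0 ≥ x·c or X_m - X_0 ≤ -y·c) = G(x, y, m). -/
open MeasureTheory Filter

/-- `Ib n m = Σ_{z=0}^{n} ((1 + (-1)^{n-z}) / 2^m) · m!/(z!(m-z)!)`, empty sum for `n < 0`. -/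
noncomputable def Ib (n : ℤ) (m : ℕ) : ℝ :=
  ∑ z ∈ Finset.range (n + 1).toNat,
    ((1 + (-1 : ℝ) ^ (n.toNat - z)) / 2 ^ m) * (m.choose z)

/-- The function `G(x, y, m)` of the paper. -/
noncomputable def Gfun (x y m : ℕ) : ℝ :=
  if x = 0 ∧ y = 0 then 1 else
    ∑ n ∈ Finset.range (m / (2 * (x + y)) + 1),
      (2 * Ib (((m : ℤ) - x) / 2 - ((x : ℤ) + y) * n) (2 * (((m : ℤ) - x) / 2) + x + 2).toNat
       - 2 * Ib (((m : ℤ) - x) / 2 - y - ((x : ℤ) + y) * n) (2 * (((m : ℤ) - x) / 2) + x + 2).toNat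
       + 2 * Ib (((m : ℤ) - y) / 2 - ((x : ℤ) + y) * n) (2 * (((m : ℤ) - y) / 2) + y + 2).toNat
       - 2 * Ib (((m : ℤ) - y) / 2 - x - ((x : ℤ) + y) * n) (2 * (((m : ℤ) - y) / 2) + y + 2).toNat)

/-- The piecewise-linear interpolation `H_{n,m}(t)` of the paper. -/
noncomputable def Hfun (n m : ℕ) (t : ℝ) : ℝ :=
  if (n : ℝ) ≤ |t| then 1 else
    (1 - ((n : ℝ) + t) / 2 + (⌊((n : ℝ) + t) / 2⌋ : ℤ))
        * Gfun (⌊((n : ℝ) + t) / 2⌋).toNat (n - (⌊((n : ℝ) + t) / 2⌋).toNat) m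
    + (((n : ℝ) + t) / 2 - (⌊((n : ℝ) + t) / 2⌋ : ℤ))
        * Gfun ((⌊((n : ℝ) + t) / 2⌋).toNat + 1) (n - (⌊((n : ℝ) + t) / 2⌋).toNat - 1) m

/-!
Take `X n = c · S n`, where `S` is the simple random walk driven by fair coin tosses and absorbed at
`x` and `-y`. An unabsorbed step is `±1` with probability `1/2` each, so `X` is a martingale with
increments at most `c`, and `P(X m - X 0 ≥ x c ∨ X m - X 0 ≤ -y c)` is the number of absorbed paths
of length `m` divided by `2 ^ m`. Conditioning on the first toss, this count `N(x, y, m)` satisfies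
`N(a+1, b+1, m+1) = N(a, b+2, m) + N(a+2, b, m)`, with `N = 2 ^ m` when `x = 0` or `y = 0`.

The closed form `G` obeys the same recursion after scaling by `2 ^ m`: `I_b(n, M + 1)` is the
distribution function `P(Bin(M, 1/2) ≤ n)`, so Pascal's rule gives the recursion summand by summand.
For `x = 0` the sum telescopes to `2 P(Bin(2k+1, 1/2) ≤ k) = 1`.
-/

open Finset

noncomputable def binomialCDF (n : ℤ) (M : ℕ) : ℝ :=
  (∑ z ∈ range (n + 1).toNat, (M.choose z : ℝ)) / 2 ^ M

lemma binomialCDF_of_neg {n : ℤ} (hn : n < 0) (M : ℕ) : binomialCDF n M = 0 := by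
  simp [binomialCDF, show (n + 1).toNat = 0 by omega]

lemma Ib_of_neg {n : ℤ} (hn : n < 0) (M : ℕ) : Ib n M = 0 := by
  simp [Ib, show (n + 1).toNat = 0 by omega]

lemma sum_range_succ_choose_succ (k M : ℕ) :
    ∑ z ∈ range (k + 1), ((M + 1).choose z : ℝ) =
      ∑ z ∈ range (k + 1), (M.choose z : ℝ) + ∑ z ∈ range k, (M.choose z : ℝ) := by
  rw [sum_range_succ' _ k, sum_range_succ' (fun z => (M.choose z : ℝ)) k]
  simp only [Nat.choose_succ_succ', Nat.cast_add, sum_add_distrib, Nat.choose_zero_right]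
  ring

lemma sum_range_neg_one_pow_mul_choose_succ (k M : ℕ) :
    ∑ z ∈ range (k + 1), (-1 : ℝ) ^ (k - z) * ((M + 1).choose z : ℝ) = M.choose k := by
  induction k with
  | zero => simp
  | succ k ih =>
    have hsign : ∀ z ∈ range (k + 1), (-1 : ℝ) ^ (k + 1 - z) = -(-1) ^ (k - z) := fun z hz => by
      rw [Nat.sub_add_comm (Nat.lt_succ_iff.mp (mem_range.mp hz)), pow_succ, mul_neg_one]
    rw [sum_range_succ, sum_congr rfl fun z hz => by rw [hsign z hz], sum_congr rfl
      fun z _ => neg_mul _ _, sum_neg_distrib, ih, Nat.choose_succ_succ']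
    simp

lemma Ib_succ (n : ℤ) (M : ℕ) : Ib n (M + 1) = binomialCDF n M := by
  rcases lt_or_ge n 0 with hn | hn
  · rw [Ib_of_neg hn, binomialCDF_of_neg hn]
  obtain ⟨k, rfl⟩ := Int.eq_ofNat_of_zero_le hn
  have hk : ((k : ℤ) + 1).toNat = k + 1 := by omega
  have hsplit : ∑ z ∈ range (k + 1), (1 + (-1 : ℝ) ^ (k - z)) * ((M + 1).choose z : ℝ) =
      2 * ∑ z ∈ range (k + 1), (M.choose z : ℝ) := by
    simp only [add_mul, one_mul, sum_add_distrib, sum_range_neg_one_pow_mul_choose_succ,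
      sum_range_succ_choose_succ, sum_range_succ (fun z => (M.choose z : ℝ)) k]
    ring
  rw [Ib, binomialCDF, hk, Int.toNat_natCast]
  simp_rw [div_mul_eq_mul_div, ← sum_div, hsplit, pow_succ]
  field_simp

lemma binomialCDF_succ (n : ℤ) (M : ℕ) :
    binomialCDF n (M + 1) = (binomialCDF n M + binomialCDF (n - 1) M) / 2 := by
  rcases lt_or_ge n 0 with hn | hn
  · rw [binomialCDF_of_neg hn, binomialCDF_of_neg hn, binomialCDF_of_neg (by omega)]
    ring
  obtain ⟨k, rfl⟩ := Int.eq_ofNat_of_zero_le hn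
  rw [binomialCDF, binomialCDF, binomialCDF, show ((k : ℤ) + 1).toNat = k + 1 by omega,
    show ((k : ℤ) - 1 + 1).toNat = k by omega, sum_range_succ_choose_succ, pow_succ]
  field_simp

lemma binomialCDF_halfway (k : ℕ) : binomialCDF k (2 * k + 1) = 1 / 2 := by
  rw [binomialCDF, show ((k : ℤ) + 1).toNat = k + 1 by omega]
  rw_mod_cast [Nat.sum_range_choose_halfway]
  rw [pow_succ, pow_mul]
  field_simp
  norm_num

/-- The first two of the four summands of `Gfun x y m`; the last two are `halfTerm y x m n`. -/
noncomputable def halfTerm (x y m n : ℕ) : ℝ :=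
  2 * Ib (((m : ℤ) - x) / 2 - ((x : ℤ) + y) * n) (2 * (((m : ℤ) - x) / 2) + x + 2).toNat
    - 2 * Ib (((m : ℤ) - x) / 2 - y - ((x : ℤ) + y) * n) (2 * (((m : ℤ) - x) / 2) + x + 2).toNat

lemma halfTerm_eq {x y m : ℕ} {t : ℤ} {N : ℕ} (ht : ((m : ℤ) - x) / 2 = t)
    (hN : 2 * t + x + 1 = N) (n : ℕ) :
    halfTerm x y m n = 2 * binomialCDF (t - (x + y) * n) N
      - 2 * binomialCDF (t - y - (x + y) * n) N := by
  rw [halfTerm, ht, show (2 * t + x + 2).toNat = N + 1 by omega, Ib_succ, Ib_succ]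

lemma halfTerm_of_lt {x y m n : ℕ} (h : m < 2 * (x + y) * n) : halfTerm x y m n = 0 := by
  have h' : (m : ℤ) < 2 * ((x + y) * n) := by rw [← mul_assoc]; exact_mod_cast h
  rw [halfTerm, Ib_of_neg (by omega), Ib_of_neg (by omega), sub_self]

lemma halfTerm_zero_right (x m n : ℕ) : halfTerm x 0 m n = 0 := by
  simp [halfTerm]

lemma halfTerm_at_time_zero {x : ℕ} (hx : 0 < x) (y n : ℕ) : halfTerm x y 0 n = 0 := by
  have : (0 : ℤ) ≤ ((x : ℤ) + y) * n := by positivity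
  rw [halfTerm, Ib_of_neg (by omega), Ib_of_neg (by omega), sub_self]

/-- With `t = ⌊(m - a) / 2⌋`, the left side is read at `(t, N + 1)` and the right-hand terms at
`(t, N)` and `(t - 1, N)`, which Pascal's rule for `binomialCDF` links. -/
lemma halfTerm_succ_succ (a b m n : ℕ) :
    halfTerm (a + 1) (b + 1) (m + 1) n = (halfTerm a (b + 2) m n + halfTerm (a + 2) b m n) / 2 := by
  set t := ((m : ℤ) - a) / 2
  set N := (2 * t + a + 1).toNat
  rw [halfTerm_eq (t := t) (N := N + 1) (by push_cast; omega) (by push_cast; omega),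
    halfTerm_eq (t := t) (N := N) rfl (by omega),
    halfTerm_eq (t := t - 1) (N := N) (by push_cast; omega) (by push_cast; omega),
    binomialCDF_succ, binomialCDF_succ]
  push_cast
  ring_nf

lemma Gfun_eq_sum {x y : ℕ} (h : ¬(x = 0 ∧ y = 0)) (m : ℕ) :
    Gfun x y m = ∑ n ∈ range (m / (2 * (x + y)) + 1), (halfTerm x y m n + halfTerm y x m n) := by
  rw [Gfun, if_neg h]
  refine sum_congr rfl fun n _ => ?_
  rw [halfTerm, halfTerm, add_comm (y : ℤ)]
  ring

lemma Gfun_comm (x y m : ℕ) : Gfun x y m = Gfun y x m := by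
  by_cases h : x = 0 ∧ y = 0
  · rw [h.1, h.2]
  rw [Gfun_eq_sum h, Gfun_eq_sum (by tauto), add_comm y x]
  exact sum_congr rfl fun n _ => add_comm _ _

lemma Gfun_eq_sum_range {x y m K : ℕ} (hxy : 0 < x + y) (hK : m < 2 * (x + y) * K) :
    Gfun x y m = ∑ n ∈ range K, (halfTerm x y m n + halfTerm y x m n) := by
  rw [Gfun_eq_sum (by omega)]
  refine sum_subset (range_subset_range.mpr ?_) fun n hK hn => ?_
  · exact Nat.div_lt_of_lt_mul hK
  · have : m < 2 * (x + y) * n := by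
      have := Nat.lt_mul_div_succ m (by omega : 0 < 2 * (x + y))
      simp only [mem_range, not_lt] at hn
      nlinarith
    rw [halfTerm_of_lt this, halfTerm_of_lt (by rwa [add_comm y]), add_zero]

lemma Gfun_zero_left {y : ℕ} (hy : 0 < y) (m : ℕ) : Gfun 0 y m = 1 := by
  set k := m / 2
  let f : ℕ → ℝ := fun n => 2 * binomialCDF (k - y * n) (2 * k + 1)
  have hterm : ∀ n, halfTerm 0 y m n + halfTerm y 0 m n = f n - f (n + 1) := fun n => by
    rw [halfTerm_zero_right, add_zero, halfTerm_eq (t := k) (N := 2 * k + 1) (by push_cast; omega)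
      (by push_cast; ring)]
    simp only [f]
    push_cast
    ring_nf
  rw [Gfun_eq_sum_range (K := m + 1) (by omega) (by nlinarith), sum_congr rfl fun n _ => hterm n,
    sum_range_sub']
  have hlast : f (m + 1) = 0 := by
    have hk : k ≤ m := Nat.div_le_self m 2
    have : k < y * (m + 1) := by nlinarith
    have : (k : ℤ) < y * (m + 1 : ℕ) := by exact_mod_cast this
    simp only [f, binomialCDF_of_neg (sub_neg.mpr this), mul_zero]
  simp only [hlast, f, Nat.cast_zero, mul_zero, sub_zero, binomialCDF_halfway]
  norm_num

lemma Gfun_of_eq_zero {x y : ℕ} (h : x = 0 ∨ y = 0) (m : ℕ) : Gfun x y m = 1 := by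
  rcases Nat.eq_zero_or_pos y with hy | hy <;> rcases Nat.eq_zero_or_pos x with hx | hx
  · simp [Gfun, hx, hy]
  · rw [Gfun_comm, hy, Gfun_zero_left hx]
  · rw [hx, Gfun_zero_left hy]
  · omega

lemma Gfun_succ_succ_zero (a b : ℕ) : Gfun (a + 1) (b + 1) 0 = 0 := by
  rw [Gfun_eq_sum (by omega)]
  exact sum_eq_zero fun n _ => by
    rw [halfTerm_at_time_zero (by omega), halfTerm_at_time_zero (by omega), add_zero]

lemma Gfun_succ_succ_succ (a b m : ℕ) :
    Gfun (a + 1) (b + 1) (m + 1) = (Gfun a (b + 2) m + Gfun (a + 2) b m) / 2 := by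
  rw [Gfun_eq_sum_range (K := m + 2) (by omega) (by nlinarith),
    Gfun_eq_sum_range (K := m + 2) (by omega) (by nlinarith),
    Gfun_eq_sum_range (K := m + 2) (by omega) (by nlinarith), ← sum_add_distrib, sum_div]
  refine sum_congr rfl fun n _ => ?_
  rw [halfTerm_succ_succ, halfTerm_succ_succ]
  ring

def absorbedStep (u v p : ℤ) (b : Bool) : ℤ :=
  if p = u ∨ p = v then p else if b then p + 1 else p - 1

def absorbedWalk (u v p : ℤ) (l : List Bool) : ℤ :=
  l.foldl (absorbedStep u v) p

lemma absorbedStep_true_add_false (u v p : ℤ) :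
    absorbedStep u v p true + absorbedStep u v p false = 2 * p := by
  by_cases h : p = u ∨ p = v <;> simp only [absorbedStep, h, if_true, if_false, Bool.false_eq_true]
  all_goals ring

lemma abs_absorbedStep_sub_le (u v p : ℤ) (b : Bool) : |absorbedStep u v p b - p| ≤ 1 := by
  unfold absorbedStep
  split_ifs <;> simp

section AbsorbedWalk

variable {u v p : ℤ}

lemma absorbedWalk_mem_Icc (hp : p ∈ Set.Icc v u) (l : List Bool) :
    absorbedWalk u v p l ∈ Set.Icc v u := by
  induction l generalizing p with
  | nil => exact hp
  | cons b l ih =>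
    refine ih ?_
    simp only [Set.mem_Icc] at hp ⊢
    unfold absorbedStep
    split_ifs <;> omega

lemma absorbedWalk_of_absorbed (hp : p = u ∨ p = v) (l : List Bool) : absorbedWalk u v p l = p := by
  induction l with
  | nil => rfl
  | cons b l ih => simpa [absorbedWalk, absorbedStep, hp] using ih

lemma absorbedWalk_cons_of_not_absorbed (hp : ¬(p = u ∨ p = v)) (b : Bool) (l : List Bool) :
    absorbedWalk u v p (b :: l) = absorbedWalk u v (if b then p + 1 else p - 1) l := by
  simp [absorbedWalk, absorbedStep, hp]

lemma absorbedWalk_ofFn_snoc {n : ℕ} (w : Fin n → Bool) (b : Bool) :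
    absorbedWalk u v p (List.ofFn (Fin.snoc w b)) =
      absorbedStep u v (absorbedWalk u v p (List.ofFn w)) b := by
  rw [absorbedWalk, absorbedWalk, List.ofFn_succ', List.concat_eq_append, List.foldl_append]
  simp

end AbsorbedWalk

lemma card_filter_fin_succ_pi {α : Type*} [Fintype α] {m : ℕ}
    (P : (Fin (m + 1) → α) → Prop) [DecidablePred P] :
    #{w | P w} = ∑ a, #{w : Fin m → α | P (Fin.cons a w)} := by
  simp only [card_filter]
  rw [← (Fin.consEquiv fun _ => α).sum_comp, Fintype.sum_prod_type]
  rfl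

def absorbedPaths (m : ℕ) (u v p : ℤ) : Finset (Fin m → Bool) :=
  {w | absorbedWalk u v p (List.ofFn w) = u ∨ absorbedWalk u v p (List.ofFn w) = v}

section AbsorbedPaths

variable {u v p : ℤ}

lemma absorbedPaths_of_absorbed (hp : p = u ∨ p = v) (m : ℕ) : absorbedPaths m u v p = univ :=
  filter_true_of_mem fun w _ => by rwa [absorbedWalk_of_absorbed hp]

lemma absorbedPaths_zero_of_not_absorbed (hp : ¬(p = u ∨ p = v)) : absorbedPaths 0 u v p = ∅ :=
  filter_false_of_mem fun w _ => by simpa [absorbedWalk] using hp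

lemma card_absorbedPaths_succ (hp : ¬(p = u ∨ p = v)) (m : ℕ) :
    #(absorbedPaths (m + 1) u v p) =
      #(absorbedPaths m u v (p + 1)) + #(absorbedPaths m u v (p - 1)) := by
  rw [absorbedPaths, card_filter_fin_succ_pi, Fintype.sum_bool]
  simp only [List.ofFn_succ, Fin.cons_zero, Fin.cons_succ, absorbedWalk_cons_of_not_absorbed hp]
  rfl

end AbsorbedPaths

/-- The start `p` is kept general so that conditioning on the first toss stays within the claim. -/
theorem card_absorbedPaths (m x y : ℕ) (p : ℤ) :
    (#(absorbedPaths m (p + x) (p - y) p) : ℝ) = 2 ^ m * Gfun x y m := by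
  induction m using Nat.strong_induction_on generalizing x y p with | _ m ih =>
  by_cases h : x = 0 ∨ y = 0
  · rw [absorbedPaths_of_absorbed (by omega), card_univ, Gfun_of_eq_zero h]
    simp
  obtain ⟨a, rfl⟩ := Nat.exists_eq_add_one.mpr (by omega : 0 < x)
  obtain ⟨b, rfl⟩ := Nat.exists_eq_add_one.mpr (by omega : 0 < y)
  have hp : ¬(p = p + (a + 1 : ℕ) ∨ p = p - (b + 1 : ℕ)) := by omega
  cases m with
  | zero => rw [absorbedPaths_zero_of_not_absorbed hp, Gfun_succ_succ_zero]; simp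
  | succ m =>
    have hup := ih m (by omega) a (b + 2) (p + 1)
    have hdown := ih m (by omega) (a + 2) b (p - 1)
    rw [show p + 1 + (a : ℤ) = p + (a + 1 : ℕ) by push_cast; ring,
      show p + 1 - ((b + 2 : ℕ) : ℤ) = p - (b + 1 : ℕ) by push_cast; ring] at hup
    rw [show p - 1 + ((a + 2 : ℕ) : ℤ) = p + (a + 1 : ℕ) by push_cast; ring,
      show p - 1 - (b : ℤ) = p - (b + 1 : ℕ) by push_cast; ring] at hdown
    rw [card_absorbedPaths_succ hp, Nat.cast_add, hup, hdown, Gfun_succ_succ_succ, pow_succ]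
    ring

noncomputable def coinTossing : Measure (ℕ → Bool) :=
  Measure.infinitePi fun _ => (PMF.uniformOfFintype Bool).toMeasure

instance : IsProbabilityMeasure coinTossing := by
  unfold coinTossing; infer_instance

def coinPrefix (n : ℕ) (ω : ℕ → Bool) : Fin n → Bool := fun i => ω i

lemma measurable_coinPrefix (n : ℕ) : Measurable (coinPrefix n) :=
  measurable_pi_lambda _ fun i => measurable_pi_apply (i : ℕ)

lemma coinPrefix_succ (n : ℕ) (ω : ℕ → Bool) :
    coinPrefix (n + 1) ω = Fin.snoc (coinPrefix n ω) (ω n) := by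
  ext i
  refine Fin.lastCases ?_ (fun j => ?_) i <;> simp [coinPrefix]

lemma map_coinPrefix_coinTossing (n : ℕ) :
    coinTossing.map (coinPrefix n) = (PMF.uniformOfFintype (Fin n → Bool)).toMeasure := by
  refine Measure.ext_of_singleton fun v => ?_
  have hcyl : coinPrefix n ⁻¹' {v} =
      Set.pi (range n : Set ℕ) fun i => if h : i < n then {v ⟨i, h⟩} else Set.univ := by
    ext ω
    simp only [Set.mem_preimage, Set.mem_singleton_iff, funext_iff, coinPrefix, Fin.forall_iff,
      Set.mem_pi, coe_range, Set.mem_Iio]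
    refine forall₂_congr fun i hi => ?_
    rw [dif_pos hi]
    rfl
  have hcoin (b : Bool) : (PMF.uniformOfFintype Bool).toMeasure {b} = 2⁻¹ := by
    rw [PMF.toMeasure_apply_singleton _ _ (.singleton b), PMF.uniformOfFintype_apply]
    simp
  rw [Measure.map_apply (measurable_coinPrefix n) (.singleton v), hcyl, coinTossing,
    Measure.infinitePi_pi _ (fun i _ => by split <;> simp),
    prod_congr rfl fun i hi => by rw [dif_pos (mem_range.mp hi), hcoin],
    PMF.toMeasure_apply_singleton _ _ (.singleton v), PMF.uniformOfFintype_apply]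
  simp [ENNReal.inv_pow]

lemma integral_comp_coinPrefix (n : ℕ) (g : (Fin n → Bool) → ℝ) :
    ∫ ω, g (coinPrefix n ω) ∂coinTossing = (∑ v, g v) / 2 ^ n := by
  rw [← integral_map (measurable_coinPrefix n).aemeasurable
      Measurable.of_discrete.aestronglyMeasurable, map_coinPrefix_coinTossing,
    PMF.integral_eq_sum, sum_div]
  refine sum_congr rfl fun v _ => ?_
  simp [PMF.uniformOfFintype_apply, div_eq_inv_mul]

lemma integrable_comp_coinPrefix (n : ℕ) (g : (Fin n → Bool) → ℝ) :
    Integrable (fun ω => g (coinPrefix n ω)) coinTossing :=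
  (Integrable.of_finite (μ := coinTossing.map (coinPrefix n))).comp_measurable
    (measurable_coinPrefix n)

lemma coinTossing_real_coinPrefix_preimage (n : ℕ) (A : Finset (Fin n → Bool)) :
    coinTossing.real (coinPrefix n ⁻¹' A) = A.card / 2 ^ n := by
  rw [measureReal_def, ← Measure.map_apply (measurable_coinPrefix n) .of_discrete,
    map_coinPrefix_coinTossing, PMF.toMeasure_apply_finset]
  simp [PMF.uniformOfFintype_apply, div_eq_mul_inv]

noncomputable def coinFiltration :
    Filtration ℕ (MeasurableSpace.pi : MeasurableSpace (ℕ → Bool)) where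
  seq n := MeasurableSpace.comap (coinPrefix n) inferInstance
  mono' i j hij := by
    have : coinPrefix i = (fun v k => v (Fin.castLE hij k)) ∘ coinPrefix j := rfl
    dsimp only
    rw [this, ← MeasurableSpace.comap_comp]
    exact MeasurableSpace.comap_mono Measurable.of_discrete.comap_le
  le' n := (measurable_coinPrefix n).comap_le

lemma stronglyMeasurable_comp_coinPrefix (n : ℕ) (g : (Fin n → Bool) → ℝ) :
    StronglyMeasurable[coinFiltration n] fun ω => g (coinPrefix n ω) :=
  (Measurable.of_discrete.comp (comap_measurable (coinPrefix n))).stronglyMeasurable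

lemma setIntegral_coinPrefix_preimage (n : ℕ) (B : Set (Fin n → Bool)) (g : (Fin n → Bool) → ℝ) :
    ∫ ω in coinPrefix n ⁻¹' B, g (coinPrefix n ω) ∂coinTossing =
      (∑ v, B.indicator g v) / 2 ^ n := by
  rw [← integral_indicator ((measurable_coinPrefix n) .of_discrete), ← integral_comp_coinPrefix]
  rfl

theorem martingale_comp_coinPrefix (f : ∀ n, (Fin n → Bool) → ℝ)
    (hf : ∀ n v, f (n + 1) (Fin.snoc v true) + f (n + 1) (Fin.snoc v false) = 2 * f n v) :
    Martingale (fun n ω => f n (coinPrefix n ω)) coinFiltration coinTossing := by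
  refine martingale_nat (fun n => stronglyMeasurable_comp_coinPrefix n (f n))
    (fun n => integrable_comp_coinPrefix n (f n)) fun n => ?_
  refine ae_eq_condExp_of_forall_setIntegral_eq (coinFiltration.le n)
    (integrable_comp_coinPrefix _ _) (fun _ _ _ => (integrable_comp_coinPrefix _ _).integrableOn)
    (fun s hs _ => ?_) (stronglyMeasurable_comp_coinPrefix n (f n)).aestronglyMeasurable
  obtain ⟨B, -, rfl⟩ := hs
  have hpre : coinPrefix n ⁻¹' B = coinPrefix (n + 1) ⁻¹' (Fin.init ⁻¹' B) := rfl
  rw [setIntegral_coinPrefix_preimage, hpre, setIntegral_coinPrefix_preimage,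
    ← (Fin.snocEquiv fun _ => Bool).sum_comp, Fintype.sum_prod_type, Fintype.sum_bool]
  have hpair : ∀ v, (Fin.init ⁻¹' B).indicator (f (n + 1)) (Fin.snocEquiv _ (true, v)) +
      (Fin.init ⁻¹' B).indicator (f (n + 1)) (Fin.snocEquiv _ (false, v)) =
        2 * B.indicator (f n) v := by
    intro v
    by_cases hv : v ∈ B <;> simp [Fin.snocEquiv, hv, hf]
  rw [← sum_add_distrib, sum_congr rfl fun v _ => hpair v, ← mul_sum,
    pow_succ]
  field_simp

noncomputable def scaledAbsorbedWalk (c : ℝ) (u v : ℤ) (n : ℕ) (ω : ℕ → Bool) : ℝ :=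
  c * absorbedWalk u v 0 (List.ofFn (coinPrefix n ω))

lemma martingale_scaledAbsorbedWalk (c : ℝ) (u v : ℤ) :
    Martingale (scaledAbsorbedWalk c u v) coinFiltration coinTossing :=
  martingale_comp_coinPrefix (fun n w => c * absorbedWalk u v 0 (List.ofFn w)) fun n w => by
    simp only [absorbedWalk_ofFn_snoc]
    rw [← mul_add, ← Int.cast_add, absorbedStep_true_add_false]
    push_cast
    ring

lemma abs_scaledAbsorbedWalk_succ_sub_le {c : ℝ} (hc : 0 ≤ c) (u v : ℤ) (n : ℕ) (ω : ℕ → Bool) :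
    |scaledAbsorbedWalk c u v (n + 1) ω - scaledAbsorbedWalk c u v n ω| ≤ c := by
  have h := abs_absorbedStep_sub_le u v (absorbedWalk u v 0 (List.ofFn (coinPrefix n ω))) (ω n)
  rw [scaledAbsorbedWalk, scaledAbsorbedWalk, coinPrefix_succ, absorbedWalk_ofFn_snoc, ← mul_sub,
    abs_mul, abs_of_nonneg hc]
  exact mul_le_of_le_one_right hc (by exact_mod_cast h)

lemma setOf_scaledAbsorbedWalk_exits {c : ℝ} (hc : 0 < c) (x y m : ℕ) :
    {ω | scaledAbsorbedWalk c x (-y) m ω - scaledAbsorbedWalk c x (-y) 0 ω ≥ (x : ℝ) * c ∨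
        scaledAbsorbedWalk c x (-y) m ω - scaledAbsorbedWalk c x (-y) 0 ω ≤ -((y : ℝ) * c)} =
      coinPrefix m ⁻¹' absorbedPaths m x (-y) 0 := by
  ext ω
  obtain ⟨hlo, hhi⟩ := absorbedWalk_mem_Icc (u := x) (v := -y) (p := 0) (by simp)
    (List.ofFn (coinPrefix m ω))
  simp only [Set.mem_ofPred_eq, Set.mem_preimage, absorbedPaths, coe_filter, scaledAbsorbedWalk]
  have hstart : absorbedWalk x (-y) 0 (List.ofFn (coinPrefix 0 ω)) = 0 := rfl
  set W := absorbedWalk x (-y) 0 (List.ofFn (coinPrefix m ω))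
  rw [hstart, Int.cast_zero, mul_zero, sub_zero, ge_iff_le, mul_comm c,
    mul_le_mul_iff_of_pos_right hc, ← neg_mul, mul_le_mul_iff_of_pos_right hc]
  have hexit : ((x : ℤ) ≤ W ∨ W ≤ -(y : ℤ)) ↔ (W = x ∨ W = -y) := by omega
  simp only [mem_univ, true_and]
  exact_mod_cast hexit

theorem exists_martingale_attaining_bound (c : ℝ) (hc : 0 < c) (x y : ℕ) :
    ∃ (Ω : Type) (m0 : MeasurableSpace Ω) (μ : Measure Ω) (_ : IsProbabilityMeasure μ)
      (ℱ : Filtration ℕ m0) (X : ℕ → Ω → ℝ),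
      Martingale X ℱ μ ∧
      (∀ m : ℕ, ∀ᵐ ω ∂μ, |X (m + 1) ω - X m ω| ≤ c) ∧
      (∀ m : ℕ,
        (μ {ω | X m ω - X 0 ω ≥ (x : ℝ) * c ∨ X m ω - X 0 ω ≤ -((y : ℝ) * c)}).toReal
          = Gfun x y m) := by
  refine ⟨ℕ → Bool, inferInstance, coinTossing, inferInstance, coinFiltration,
    scaledAbsorbedWalk c x (-y), martingale_scaledAbsorbedWalk c x (-y),
    fun m => ae_of_all _ (abs_scaledAbsorbedWalk_succ_sub_le hc.le x (-y) m), fun m => ?_⟩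
  have hcard := card_absorbedPaths m x y 0
  rw [zero_add, zero_sub] at hcard
  rw [setOf_scaledAbsorbedWalk_exits hc, ← measureReal_def, coinTossing_real_coinPrefix_preimage,
    hcard]
  field_simp
end

section
/- Let c > 0 be a real number and let {X_n}_{n≥0} be a martingale (with respect to some filtration) satisfying |X_{m+1} - X_m| ≤ c almost surely for every m ≥ 0. Then for all non-negative integers x, y, m, the probability P(X_m - X_0 ≥ x·c or X_m - X_0 ≤ -y·c) is at most 2·I_b(⌊(m-x)/2⌋, 2⌊(m-x)/2⌋ + x + 2) + 2·I_b(⌊(m-y)/2⌋, 2⌊(m-y)/2⌋ + y + 2). -/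
/-!
Normalise to `Y k = x - (X k - X 0) / c`, a martingale with increments in `[-1, 1]` for which the
upper event is `Y m ≤ 0`. Let `v_j(k)` be the probability that a simple random walk reaches level
`k` within `j` steps, and `ψ_j` its piecewise-linear interpolation. Since
`v_{j+1}(k) = (v_j(k - 1) + v_j(k + 1)) / 2` for `k ≥ 1` and `v_j` is discretely convex there,
`ψ_j` lies below a line through `(s, ψ_{j+1}(s))` on `[s - 1, s + 1]`. Hence `E ψ_{m-k}(Y_k)` is
nonincreasing in `k`, and `P(Y_m ≤ 0) ≤ E ψ_0(Y_m) ≤ ψ_m(x) = v_m(x)`. By the reflection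
principle `v_m(x)` is the binomial sum `2 I_b(⌊(m-x)/2⌋, 2⌊(m-x)/2⌋ + x + 2)`; the lower tail is the
same bound applied to `-X`, and a union bound finishes.
-/

open MeasureTheory Filter

open Finset

def binomPrefix (M t : ℕ) : ℕ := ∑ z ∈ range t, M.choose z

def binomParitySum (M n : ℕ) : ℕ := ∑ z ∈ range (n + 1), if Even (n - z) then M.choose z else 0

lemma binomPrefix_succ (M t : ℕ) : binomPrefix M (t + 1) = binomPrefix M t + M.choose t :=
  sum_range_succ _ _

lemma binomPrefix_succ_left (M t : ℕ) :
    binomPrefix (M + 1) t = binomPrefix M t + binomPrefix M (t - 1) := by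
  induction t with
  | zero => simp [binomPrefix]
  | succ t ih =>
    rcases t with _ | t
    · simp [binomPrefix]
    · rw [binomPrefix_succ, ih, Nat.add_sub_cancel, Nat.add_sub_cancel, Nat.choose_succ_succ',
        binomPrefix_succ M (t + 1), binomPrefix_succ M t]
      ring

lemma binomPrefix_add_binomPrefix {M a b : ℕ} (hab : a + b = M + 1) :
    binomPrefix M a + binomPrefix M b = 2 ^ M := by
  have hreflect : binomPrefix M b = ∑ z ∈ Ico a (M + 1), M.choose z :=
    calc binomPrefix M b = ∑ z ∈ Ico 0 b, M.choose (M - z) := by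
          rw [binomPrefix, Nat.Ico_zero_eq_range]
          exact sum_congr rfl fun z hz => (Nat.choose_symm (by grind)).symm
      _ = ∑ z ∈ Ico (M + 1 - b) (M + 1 - 0), M.choose z := sum_Ico_reflect _ _ (by omega)
      _ = ∑ z ∈ Ico a (M + 1), M.choose z := by rw [show M + 1 - b = a by omega, Nat.sub_zero]
  rw [hreflect, binomPrefix, sum_range_add_sum_Ico _ (by omega), Nat.sum_range_choose]

lemma binomParitySum_succ_add (M n : ℕ) :
    binomParitySum M (n + 1) + binomParitySum M n = binomPrefix M (n + 2) := by
  rw [binomParitySum, sum_range_succ, Nat.sub_self, if_pos (by decide), add_right_comm,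
    binomParitySum, ← sum_add_distrib, binomPrefix_succ, binomPrefix]
  congr 1
  refine sum_congr rfl fun z hz => ?_
  rw [Nat.succ_sub (Nat.lt_succ_iff.mp (mem_range.mp hz))]
  by_cases h : Even (n - z) <;> simp [h, Nat.even_add_one]

lemma binomParitySum_succ (M n : ℕ) : binomParitySum (M + 1) n = binomPrefix M (n + 1) := by
  induction n with
  | zero => simp [binomParitySum, binomPrefix]
  | succ n ih =>
    show binomParitySum (M + 1) (n + 1) = binomPrefix M (n + 2)
    have h := binomParitySum_succ_add (M + 1) n
    rw [ih, binomPrefix_succ_left, show n + 2 - 1 = n + 1 from rfl] at h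
    omega

lemma Ib_natCast (n M : ℕ) : Ib n M = 2 * binomParitySum M n / 2 ^ M := by
  rw [Ib, binomParitySum, show ((n : ℤ) + 1).toNat = n + 1 by omega, Int.toNat_natCast,
    Nat.cast_sum, mul_sum, sum_div]
  refine sum_congr rfl fun z _ => ?_
  rcases Nat.even_or_odd (n - z) with h | h
  · rw [h.neg_one_pow, if_pos h]; ring
  · rw [h.neg_one_pow, if_neg (Nat.not_even_iff_odd.mpr h)]; simp

/-- `hitProb j k` is the probability that a simple random walk started at `0` reaches level `k`
within `j` steps. -/
noncomputable def hitProb : ℕ → ℤ → ℝ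
  | 0, k => if k ≤ 0 then 1 else 0
  | j + 1, k => if k ≤ 0 then 1 else (hitProb j (k - 1) + hitProb j (k + 1)) / 2

lemma hitProb_of_nonpos (j : ℕ) {k : ℤ} (hk : k ≤ 0) : hitProb j k = 1 := by
  cases j <;> simp [hitProb, hk]

lemma hitProb_succ_of_pos (j : ℕ) {k : ℤ} (hk : 0 < k) :
    hitProb (j + 1) k = (hitProb j (k - 1) + hitProb j (k + 1)) / 2 := by
  rw [hitProb, if_neg (not_le.mpr hk)]

lemma hitProb_nonneg (j : ℕ) (k : ℤ) : 0 ≤ hitProb j k := by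
  induction j generalizing k with
  | zero => rw [hitProb]; split <;> norm_num
  | succ j ih =>
    rw [hitProb]; split
    · norm_num
    · linarith [ih (k - 1), ih (k + 1)]

lemma hitProb_le_one (j : ℕ) (k : ℤ) : hitProb j k ≤ 1 := by
  induction j generalizing k with
  | zero => rw [hitProb]; split <;> norm_num
  | succ j ih =>
    rw [hitProb]; split
    · norm_num
    · linarith [ih (k - 1), ih (k + 1)]

lemma hitProb_convex (j : ℕ) {k : ℤ} (hk : 0 < k) :
    2 * hitProb j k ≤ hitProb j (k - 1) + hitProb j (k + 1) := by
  induction j generalizing k with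
  | zero =>
    simp only [hitProb, if_neg (not_le.mpr hk), if_neg (show ¬ k + 1 ≤ 0 by omega)]
    split <;> norm_num
  | succ j ih =>
    rw [hitProb_succ_of_pos j hk, hitProb_succ_of_pos j (show 0 < k + 1 by omega)]
    obtain rfl | hk₁ := (show k = 1 ∨ 1 < k by omega)
    · have h₂ := ih (show (0 : ℤ) < 2 by norm_num)
      rw [sub_self, hitProb_of_nonpos _ le_rfl, hitProb_of_nonpos _ le_rfl]
      norm_num at h₂ ⊢
      linarith
    · have h₁ := ih (show 0 < k - 1 by omega)
      have h₂ := ih (show 0 < k + 1 by omega)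
      rw [hitProb_succ_of_pos j (show 0 < k - 1 by omega)]
      simp only [sub_add_cancel, add_sub_cancel_right] at h₁ h₂ ⊢
      linarith

/-- The reflection principle: reaching `k` within `m` steps has probability
`P(S_m ≥ k) + P(S_m ≥ k + 1)`, and `S_m = m - 2z` with `z` the number of down-steps. -/
lemma hitProb_natCast (m k : ℕ) :
    hitProb m k = (binomPrefix m ((m + 2 - k) / 2) + binomPrefix m ((m + 1 - k) / 2)) / 2 ^ m := by
  induction m generalizing k with
  | zero =>
    rcases k with _ | k
    · simp [hitProb, binomPrefix]
    · simp [hitProb, binomPrefix, show (1 - k) / 2 = 0 by omega]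
  | succ m ih =>
    rcases k with _ | k
    · rw [Nat.cast_zero, hitProb_of_nonpos _ le_rfl, ← Nat.cast_add,
        binomPrefix_add_binomPrefix (by omega)]
      simp
    · rw [hitProb_succ_of_pos m (by positivity), Nat.cast_succ, add_sub_cancel_right,
        show ((k : ℤ) + 1 + 1) = ((k + 2 : ℕ) : ℤ) by push_cast; ring, ih, ih,
        binomPrefix_succ_left m, binomPrefix_succ_left m,
        show (m + 1 + 2 - (k + 1)) / 2 - 1 = (m + 2 - (k + 2)) / 2 by omega,
        show (m + 1 + 1 - (k + 1)) / 2 - 1 = (m + 1 - (k + 2)) / 2 by omega,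
        show (m + 1 + 2 - (k + 1)) / 2 = (m + 2 - k) / 2 by omega,
        show (m + 1 + 1 - (k + 1)) / 2 = (m + 1 - k) / 2 by omega]
      push_cast
      ring

lemma hitProb_eq_Ib (m x : ℕ) :
    hitProb m x = 2 * Ib (((m : ℤ) - x) / 2) (2 * (((m : ℤ) - x) / 2) + x + 2).toNat := by
  rcases lt_or_ge m x with hmx | hxm
  · rw [Ib_of_neg (by omega), hitProb_natCast,
      show (m + 2 - x) / 2 = 0 by omega, show (m + 1 - x) / 2 = 0 by omega]
    simp [binomPrefix]
  obtain ⟨n, hn⟩ : ∃ n : ℕ, ((m : ℤ) - x) / 2 = n := ⟨(m - x) / 2, by omega⟩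
  rw [hn, show (2 * (n : ℤ) + x + 2).toNat = (2 * n + x + 1) + 1 by omega, Ib_natCast,
    binomParitySum_succ, hitProb_natCast]
  obtain rfl | rfl : m = x + 2 * n ∨ m = x + 2 * n + 1 := by omega
  · rw [show (x + 2 * n + 2 - x) / 2 = n + 1 by omega, show (x + 2 * n + 1 - x) / 2 = n by omega,
      show 2 * n + x + 1 = x + 2 * n + 1 by ring, binomPrefix_succ_left, Nat.add_sub_cancel]
    push_cast
    ring
  · rw [show (x + 2 * n + 1 + 2 - x) / 2 = n + 1 by omega,
      show (x + 2 * n + 1 + 1 - x) / 2 = n + 1 by omega, show 2 * n + x + 1 = x + 2 * n + 1 by ring]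
    ring

noncomputable def hitProbLin (j : ℕ) (s : ℝ) : ℝ :=
  (⌊s⌋ + 1 - s) * hitProb j ⌊s⌋ + (s - ⌊s⌋) * hitProb j (⌊s⌋ + 1)

lemma hitProbLin_intCast (j : ℕ) (k : ℤ) : hitProbLin j k = hitProb j k := by
  simp [hitProbLin]

lemma hitProbLin_eq_of_mem_Icc (j : ℕ) (k : ℤ) {s : ℝ} (h₁ : k ≤ s) (h₂ : s ≤ k + 1) :
    hitProbLin j s = (k + 1 - s) * hitProb j k + (s - k) * hitProb j (k + 1) := by
  obtain rfl | h₂ := h₂.eq_or_lt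
  · rw [← Int.cast_one, ← Int.cast_add, hitProbLin_intCast]
    simp
  · rw [hitProbLin, Int.floor_eq_iff.mpr ⟨h₁, h₂⟩]

lemma hitProbLin_of_nonpos (j : ℕ) {s : ℝ} (hs : s ≤ 0) : hitProbLin j s = 1 := by
  have hceil : ⌈s⌉ ≤ 0 := Int.ceil_le.mpr (by simpa using hs)
  rw [hitProbLin_eq_of_mem_Icc j (⌈s⌉ - 1) (by push_cast; linarith [Int.ceil_lt_add_one s])
    (by push_cast; linarith [Int.le_ceil s]), hitProb_of_nonpos j (by omega),
    hitProb_of_nonpos j (by omega)]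
  ring

lemma hitProbLin_nonneg (j : ℕ) (s : ℝ) : 0 ≤ hitProbLin j s := by
  rw [hitProbLin]
  nlinarith [Int.floor_le s, Int.lt_floor_add_one s, hitProb_nonneg j ⌊s⌋, hitProb_nonneg j (⌊s⌋ + 1)]

lemma hitProbLin_le_one (j : ℕ) (s : ℝ) : hitProbLin j s ≤ 1 := by
  rw [hitProbLin]
  nlinarith [Int.floor_le s, Int.lt_floor_add_one s, hitProb_le_one j ⌊s⌋, hitProb_le_one j (⌊s⌋ + 1)]

lemma measurable_hitProbLin (j : ℕ) : Measurable (hitProbLin j) := by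
  unfold hitProbLin
  fun_prop

lemma hitProbLin_le_of_segment (j : ℕ) (k : ℤ) {a b A L s₀ u : ℝ} (hka : k ≤ a) (hbk : b ≤ k + 1)
    (ha : hitProbLin j a ≤ A + L * (a - s₀)) (hb : hitProbLin j b ≤ A + L * (b - s₀))
    (hau : a ≤ u) (hub : u ≤ b) : hitProbLin j u ≤ A + L * (u - s₀) := by
  rw [hitProbLin_eq_of_mem_Icc j k hka (by linarith)] at ha
  rw [hitProbLin_eq_of_mem_Icc j k (by linarith) hbk] at hb
  rw [hitProbLin_eq_of_mem_Icc j k (by linarith) (by linarith)]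
  rcases le_total 0 (hitProb j (k + 1) - hitProb j k - L) with hslope | hslope
  · nlinarith [mul_nonneg hslope (sub_nonneg.mpr hub)]
  · nlinarith [mul_nonneg (neg_nonneg.mpr hslope) (sub_nonneg.mpr hau)]

lemma hitProbLin_succ (j : ℕ) {s : ℝ} (hs : 1 ≤ s) :
    hitProbLin (j + 1) s = (hitProbLin j (s - 1) + hitProbLin j (s + 1)) / 2 := by
  have hk : 0 < ⌊s⌋ := Int.floor_pos.mpr hs
  have h₁ := Int.floor_le s
  have h₂ := Int.lt_floor_add_one s
  rw [hitProbLin, hitProbLin_eq_of_mem_Icc j (⌊s⌋ - 1) (by push_cast; linarith)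
      (by push_cast; linarith),
    hitProbLin_eq_of_mem_Icc j (⌊s⌋ + 1) (by push_cast; linarith) (by push_cast; linarith),
    hitProb_succ_of_pos j hk, hitProb_succ_of_pos j (by omega)]
  simp only [sub_add_cancel, add_sub_cancel_right, add_assoc, Int.cast_sub, Int.cast_add,
    Int.cast_one]
  ring

/-- At the nodes `k` and `k + 1` the chord of the interpolation of a convex sequence `a, b, c, d`
(at `k - 1, …, k + 2`) over `[k - 1 + θ, k + 1 + θ]` lies above `b` and `c`. -/
lemma le_chord_of_convex {a b c d θ : ℝ} (hθ₀ : 0 ≤ θ) (hθ₁ : θ ≤ 1) (habc : 2 * b ≤ a + c)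
    (hbcd : 2 * c ≤ b + d) :
    2 * b ≤ (1 + θ) * ((1 - θ) * a + θ * b) + (1 - θ) * ((1 - θ) * c + θ * d) ∧
      2 * c ≤ θ * ((1 - θ) * a + θ * b) + (2 - θ) * ((1 - θ) * c + θ * d) := by
  constructor
  · nlinarith [mul_nonneg (mul_nonneg (sub_nonneg.mpr hθ₁) (by linarith : (0 : ℝ) ≤ 1 + θ))
      (sub_nonneg.mpr habc), mul_nonneg (mul_nonneg hθ₀ (sub_nonneg.mpr hθ₁)) (sub_nonneg.mpr hbcd)]
  · nlinarith [mul_nonneg (mul_nonneg hθ₀ (sub_nonneg.mpr hθ₁)) (sub_nonneg.mpr habc),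
      mul_nonneg (mul_nonneg hθ₀ (by linarith : (0 : ℝ) ≤ 2 - θ)) (sub_nonneg.mpr hbcd)]

lemma hitProbLin_le_chord (j : ℕ) {s u : ℝ} (hs : 1 ≤ s) (h₁ : s - 1 ≤ u) (h₂ : u ≤ s + 1) :
    hitProbLin j u ≤ (hitProbLin j (s - 1) + hitProbLin j (s + 1)) / 2
      + (hitProbLin j (s + 1) - hitProbLin j (s - 1)) / 2 * (u - s) := by
  set k := ⌊s⌋
  have hk : 0 < k := Int.floor_pos.mpr hs
  have hks : (k : ℝ) ≤ s := Int.floor_le s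
  have hsk : s < k + 1 := Int.lt_floor_add_one s
  have hminus :
      hitProbLin j (s - 1) = (1 - (s - k)) * hitProb j (k - 1) + (s - k) * hitProb j k := by
    rw [hitProbLin_eq_of_mem_Icc j (k - 1) (by push_cast; linarith) (by push_cast; linarith),
      sub_add_cancel]
    push_cast
    ring
  have hplus :
      hitProbLin j (s + 1) = (1 - (s - k)) * hitProb j (k + 1) + (s - k) * hitProb j (k + 2) := by
    rw [hitProbLin_eq_of_mem_Icc j (k + 1) (by push_cast; linarith) (by push_cast; linarith),
      show k + 1 + 1 = k + 2 by ring]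
    push_cast
    ring
  have hconv := hitProb_convex j (show 0 < k + 1 by omega)
  rw [add_sub_cancel_right, show k + 1 + 1 = k + 2 by ring] at hconv
  obtain ⟨hb, hc⟩ :=
    le_chord_of_convex (θ := s - k) (by linarith) (by linarith) (hitProb_convex j hk) hconv
  have hnode : hitProbLin j k ≤ (hitProbLin j (s - 1) + hitProbLin j (s + 1)) / 2
      + (hitProbLin j (s + 1) - hitProbLin j (s - 1)) / 2 * (k - s) := by
    rw [hitProbLin_intCast, hminus, hplus]
    linarith
  have hnode' : hitProbLin j (k + 1) ≤ (hitProbLin j (s - 1) + hitProbLin j (s + 1)) / 2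
      + (hitProbLin j (s + 1) - hitProbLin j (s - 1)) / 2 * (k + 1 - s) := by
    rw [show (k : ℝ) + 1 = (k + 1 : ℤ) by push_cast; ring, hitProbLin_intCast, hminus, hplus]
    push_cast
    linarith
  rcases le_or_gt u k with hu | hu
  · exact hitProbLin_le_of_segment j (k - 1) (by push_cast; linarith) (by push_cast; linarith)
      (le_of_eq (by ring)) hnode h₁ hu
  rcases le_or_gt u (k + 1) with hu' | hu'
  · exact hitProbLin_le_of_segment j k le_rfl le_rfl hnode hnode' hu.le hu'
  · exact hitProbLin_le_of_segment j (k + 1) (by push_cast; exact le_rfl) (by push_cast; linarith)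
      hnode' (le_of_eq (by ring)) hu'.le h₂

noncomputable def hitSlope (j : ℕ) (s : ℝ) : ℝ :=
  if s ≤ 0 then 0
  else if s < 1 then (hitProb j 2 - 1) / 2
  else (hitProbLin j (s + 1) - hitProbLin j (s - 1)) / 2

lemma abs_hitSlope_le (j : ℕ) (s : ℝ) : |hitSlope j s| ≤ 1 := by
  unfold hitSlope
  split_ifs
  · simp
  · rw [abs_le]; constructor <;> linarith [hitProb_nonneg j 2, hitProb_le_one j 2]
  · rw [abs_le]; constructor <;> linarith [hitProbLin_nonneg j (s + 1), hitProbLin_le_one j (s + 1),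
      hitProbLin_nonneg j (s - 1), hitProbLin_le_one j (s - 1)]

lemma measurable_hitSlope (j : ℕ) : Measurable (hitSlope j) := by
  unfold hitSlope
  refine Measurable.ite measurableSet_Iic measurable_const
    (Measurable.ite measurableSet_Iio measurable_const ?_)
  have := measurable_hitProbLin j
  fun_prop

/-- For `s ≥ 1` the line is the chord of `hitProbLin j` over `[s - 1, s + 1]`; for `0 < s < 1` it
is the chord over `[0, 2]`, which lies above `hitProbLin j = 1` on `[-1, 0]` because its slope is
nonpositive. -/
lemma hitProbLin_le_tangent (j : ℕ) {s u : ℝ} (h₁ : s - 1 ≤ u) (h₂ : u ≤ s + 1) :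
    hitProbLin j u ≤ hitProbLin (j + 1) s + hitSlope j s * (u - s) := by
  rcases le_or_gt s 0 with hs₀ | hs₀
  · rw [hitSlope, if_pos hs₀, hitProbLin_of_nonpos _ hs₀]
    linarith [hitProbLin_le_one j u]
  rcases lt_or_ge s 1 with hs₁ | hs₁
  · have hv₁ : hitProb (j + 1) 1 = (1 + hitProb j 2) / 2 := by
      rw [hitProb_succ_of_pos j one_pos, sub_self, hitProb_of_nonpos j le_rfl]
      rfl
    have hs : hitProbLin (j + 1) s = 1 + (hitProb j 2 - 1) / 2 * s := by
      rw [hitProbLin_eq_of_mem_Icc (j + 1) 0 (by simpa using hs₀.le) (by simpa using hs₁.le),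
        hitProb_of_nonpos _ le_rfl, zero_add, hv₁]
      push_cast
      ring
    rw [hitSlope, if_neg hs₀.not_ge, if_pos hs₁, hs]
    rcases le_or_gt u 0 with hu | hu
    · rw [hitProbLin_of_nonpos j hu]
      nlinarith [hitProb_le_one j 2]
    · have hchord := hitProbLin_le_chord j le_rfl (by linarith) (by linarith : u ≤ 1 + 1)
      rw [sub_self, hitProbLin_of_nonpos j le_rfl, one_add_one_eq_two,
        show hitProbLin j 2 = hitProb j 2 by exact_mod_cast hitProbLin_intCast j 2] at hchord
      linarith
  · rw [hitSlope, if_neg (by linarith), if_neg (by linarith), hitProbLin_succ j hs₁]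
    exact hitProbLin_le_chord j hs₁ h₁ h₂

section Martingale

variable {Ω : Type*} {m0 : MeasurableSpace Ω} {μ : Measure Ω} {ℱ : Filtration ℕ m0}
  {Y : ℕ → Ω → ℝ}

lemma MeasureTheory.Martingale.integral_mul_sub_eq_zero [SigmaFiniteFiltration μ ℱ]
    (hY : Martingale Y ℱ μ) {k : ℕ} {g : Ω → ℝ} (hg : StronglyMeasurable[ℱ k] g) {C : ℝ}
    (hgC : ∀ ω, |g ω| ≤ C) :
    ∫ ω, g ω * (Y (k + 1) ω - Y k ω) ∂μ = 0 := by
  have hgC' : ∀ᵐ ω ∂μ, ‖g ω‖ ≤ C := ae_of_all _ hgC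
  have hg' : AEStronglyMeasurable g μ := (hg.mono (ℱ.le k)).aestronglyMeasurable
  have hint : ∀ i, Integrable (fun ω => g ω * Y i ω) μ :=
    fun i => (hY.integrable i).bdd_mul hg' hgC'
  have hpull : μ[fun ω => g ω * Y (k + 1) ω | ℱ k] =ᵐ[μ] fun ω => g ω * Y k ω := by
    filter_upwards [condExp_mul_of_stronglyMeasurable_left hg (hint (k + 1)) (hY.integrable _),
      hY.condExp_ae_eq k.le_succ] with ω hω hω'
    exact hω.trans (congrArg (g ω * ·) hω')
  simp_rw [mul_sub]
  rw [integral_sub (hint _) (hint _), sub_eq_zero, ← integral_condExp (ℱ.le k)]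
  exact integral_congr_ae hpull

variable [IsFiniteMeasure μ]

lemma integrable_hitProbLin_comp (j : ℕ) {f : Ω → ℝ} (hf : Measurable f) :
    Integrable (fun ω => hitProbLin j (f ω)) μ :=
  .of_bound ((measurable_hitProbLin j).comp hf).aestronglyMeasurable 1 <| ae_of_all _ fun ω => by
    rw [Real.norm_eq_abs, abs_of_nonneg (hitProbLin_nonneg j _)]
    exact hitProbLin_le_one j _

lemma integral_hitProbLin_succ_le (hY : Martingale Y ℱ μ) {k : ℕ}
    (hinc : ∀ᵐ ω ∂μ, |Y (k + 1) ω - Y k ω| ≤ 1) (j : ℕ) :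
    ∫ ω, hitProbLin j (Y (k + 1) ω) ∂μ ≤ ∫ ω, hitProbLin (j + 1) (Y k ω) ∂μ := by
  have hmeas : ∀ i, Measurable (Y i) := fun i =>
    ((hY.stronglyMeasurable i).mono (ℱ.le i)).measurable
  have hg : StronglyMeasurable[ℱ k] fun ω => hitSlope j (Y k ω) :=
    ((measurable_hitSlope j).comp (hY.stronglyMeasurable k).measurable).stronglyMeasurable
  have hgint : Integrable (fun ω => hitSlope j (Y k ω) * (Y (k + 1) ω - Y k ω)) μ :=
    ((hY.integrable _).sub (hY.integrable _)).bdd_mul (hg.mono (ℱ.le k)).aestronglyMeasurable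
      (ae_of_all _ fun ω => abs_hitSlope_le j _)
  calc ∫ ω, hitProbLin j (Y (k + 1) ω) ∂μ
      ≤ ∫ ω, hitProbLin (j + 1) (Y k ω) + hitSlope j (Y k ω) * (Y (k + 1) ω - Y k ω) ∂μ := by
        refine integral_mono_ae (integrable_hitProbLin_comp j (hmeas _))
          ((integrable_hitProbLin_comp _ (hmeas _)).add hgint) ?_
        filter_upwards [hinc] with ω hω
        rw [abs_le] at hω
        exact hitProbLin_le_tangent j (by linarith) (by linarith)
    _ = ∫ ω, hitProbLin (j + 1) (Y k ω) ∂μ := by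
        rw [integral_add (integrable_hitProbLin_comp _ (hmeas _)) hgint,
          hY.integral_mul_sub_eq_zero hg fun _ => abs_hitSlope_le j _, add_zero]

lemma integral_hitProbLin_le (hY : Martingale Y ℱ μ)
    (hinc : ∀ k, ∀ᵐ ω ∂μ, |Y (k + 1) ω - Y k ω| ≤ 1) (j k : ℕ) :
    ∫ ω, hitProbLin 0 (Y (k + j) ω) ∂μ ≤ ∫ ω, hitProbLin j (Y k ω) ∂μ := by
  induction j generalizing k with
  | zero => exact le_rfl
  | succ j ih =>
    rw [show k + (j + 1) = k + 1 + j by omega]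
    exact (ih (k + 1)).trans (integral_hitProbLin_succ_le hY (hinc k) j)

lemma measureReal_nonpos_le_integral_hitProbLin (hY : Martingale Y ℱ μ)
    (hinc : ∀ k, ∀ᵐ ω ∂μ, |Y (k + 1) ω - Y k ω| ≤ 1) (m : ℕ) :
    μ.real {ω | Y m ω ≤ 0} ≤ ∫ ω, hitProbLin m (Y 0 ω) ∂μ := by
  have hmeas : Measurable (Y m) := ((hY.stronglyMeasurable m).mono (ℱ.le m)).measurable
  have hs : MeasurableSet {ω | Y m ω ≤ 0} := measurableSet_le hmeas measurable_const
  calc μ.real {ω | Y m ω ≤ 0} = ∫ ω, {ω | Y m ω ≤ 0}.indicator 1 ω ∂μ :=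
        (integral_indicator_one hs).symm
    _ ≤ ∫ ω, hitProbLin 0 (Y m ω) ∂μ :=
        integral_mono ((integrable_const 1).indicator hs) (integrable_hitProbLin_comp 0 hmeas)
          fun ω => Set.indicator_apply_le' (fun hω => (hitProbLin_of_nonpos 0 hω).ge)
            fun _ => hitProbLin_nonneg 0 _
    _ ≤ ∫ ω, hitProbLin m (Y 0 ω) ∂μ := by
        simpa using integral_hitProbLin_le hY hinc m 0

end Martingale

lemma measureReal_le_hitProb {Ω : Type*} {m0 : MeasurableSpace Ω} {μ : Measure Ω}
    [IsProbabilityMeasure μ] {ℱ : Filtration ℕ m0} {X : ℕ → Ω → ℝ} {c : ℝ} (hc : 0 < c)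
    (hX : Martingale X ℱ μ) (hinc : ∀ k, ∀ᵐ ω ∂μ, |X (k + 1) ω - X k ω| ≤ c) (x m : ℕ) :
    μ.real {ω | X m ω - X 0 ω ≥ (x : ℝ) * c} ≤ hitProb m x := by
  set Y : ℕ → Ω → ℝ := fun k ω => x - (X k ω - X 0 ω) / c
  have hY : Martingale Y ℱ μ := by
    convert (martingale_const ℱ μ (x : ℝ)).sub ((hX.sub (martingale_const_fun ℱ μ
      (hX.stronglyMeasurable 0) (hX.integrable 0))).smul c⁻¹) using 1
    ext k ω
    simp [Y, div_eq_inv_mul]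
  have hYinc : ∀ k, ∀ᵐ ω ∂μ, |Y (k + 1) ω - Y k ω| ≤ 1 := fun k => by
    filter_upwards [hinc k] with ω hω
    rw [show Y (k + 1) ω - Y k ω = -((X (k + 1) ω - X k ω) / c) by simp only [Y]; ring, abs_neg,
      abs_div, abs_of_pos hc, div_le_one hc]
    exact hω
  have hset : {ω | X m ω - X 0 ω ≥ (x : ℝ) * c} = {ω | Y m ω ≤ 0} := by
    ext ω
    simp [Y, le_div_iff₀ hc]
  calc μ.real {ω | X m ω - X 0 ω ≥ (x : ℝ) * c} = μ.real {ω | Y m ω ≤ 0} := by rw [hset]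
    _ ≤ ∫ ω, hitProbLin m (Y 0 ω) ∂μ := measureReal_nonpos_le_integral_hitProbLin hY hYinc m
    _ = hitProb m x := by simp [Y, ← hitProbLin_intCast]

theorem simple_bound_for_bounded_martingale
    {Ω : Type*} {m0 : MeasurableSpace Ω} {μ : Measure Ω} [IsProbabilityMeasure μ]
    {ℱ : Filtration ℕ m0} {X : ℕ → Ω → ℝ} {c : ℝ} (hc : 0 < c)
    (hmart : Martingale X ℱ μ)
    (hbdd : ∀ m : ℕ, ∀ᵐ ω ∂μ, |X (m + 1) ω - X m ω| ≤ c)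
    (x y m : ℕ) :
    (μ {ω | X m ω - X 0 ω ≥ (x : ℝ) * c ∨ X m ω - X 0 ω ≤ -((y : ℝ) * c)}).toReal
      ≤ 2 * Ib (((m : ℤ) - x) / 2) (2 * (((m : ℤ) - x) / 2) + x + 2).toNat
        + 2 * Ib (((m : ℤ) - y) / 2) (2 * (((m : ℤ) - y) / 2) + y + 2).toNat := by
  have hbdd_neg : ∀ k, ∀ᵐ ω ∂μ, |(-X) (k + 1) ω - (-X) k ω| ≤ c := fun k =>
    (hbdd k).mono fun ω hω => by simpa only [Pi.neg_apply, neg_sub_neg, abs_sub_comm] using hω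
  have hlower : {ω | X m ω - X 0 ω ≤ -((y : ℝ) * c)}
      = {ω | (-X) m ω - (-X) 0 ω ≥ (y : ℝ) * c} := by
    ext ω
    simp only [Set.mem_ofPred_eq, Pi.neg_apply]
    constructor <;> intro h <;> linarith
  rw [← hitProb_eq_Ib, ← hitProb_eq_Ib, ← measureReal_def, Set.ofPred_or, hlower]
  exact (measureReal_union_le _ _).trans (add_le_add (measureReal_le_hitProb hc hmart hbdd x m)
    (measureReal_le_hitProb hc hmart.neg hbdd_neg y m))
end

section
/- For every non-negative integer n, I_b(n, 2n+2) = 1/2. -/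
open MeasureTheory Filter

lemma alt_sum (s k : ℕ) :
    ∑ z ∈ Finset.range (k+1), (-1:ℝ)^z * ((s+1).choose z) = (-1)^k * (s.choose k) := by
  induction k with
  | zero => simp
  | succ k ih =>
    rw [Finset.sum_range_succ, ih, Nat.choose_succ_succ]
    push_cast
    ring

lemma plain_sum (n : ℕ) :
    ∑ z ∈ Finset.range (n+1), ((2*n+2).choose z : ℝ) = 2 * 4^n - (2*n+1).choose n := by
  have h1 : ∑ i ∈ Finset.range (n+1), (((2*n+1).choose i : ℝ)) = 4^n := by
    exact_mod_cast congrArg (Nat.cast : ℕ → ℝ) (Nat.sum_range_choose_halfway n)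
  have h2 : ∑ z ∈ Finset.range n, (((2*n+1).choose z : ℝ)) = 4^n - (2*n+1).choose n := by
    have := Finset.sum_range_succ (fun i => (((2*n+1).choose i : ℝ))) n
    rw [h1] at this; linarith [this]
  have h3 : ∑ z ∈ Finset.range n, (((2*n+1).choose (z+1) : ℝ)) = 4^n - 1 := by
    have := Finset.sum_range_succ' (fun i => (((2*n+1).choose i : ℝ))) n
    rw [h1] at this; simp at this; linarith [this]
  have h4 := Finset.sum_range_succ' (fun z => (((2*n+2).choose z : ℝ))) n
  rw [h4]
  have h5 : ∀ z ∈ Finset.range n, (((2*n+2).choose (z+1) : ℝ))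
      = ((2*n+1).choose z : ℝ) + ((2*n+1).choose (z+1) : ℝ) := by
    intro z _
    have : (2*n+2).choose (z+1) = (2*n+1).choose z + (2*n+1).choose (z+1) :=
      Nat.choose_succ_succ (2*n+1) z
    push_cast [this]; ring
  rw [Finset.sum_congr rfl h5, Finset.sum_add_distrib, h2, h3]
  simp
  ring

theorem Ib_self_eq_half (n : ℕ) : Ib (n : ℤ) (2 * n + 2) = 1 / 2 := by
  unfold Ib
  have ht : ((n:ℤ) + 1).toNat = n + 1 := by omega
  rw [ht]
  simp only [Int.toNat_natCast]
  have key : ∀ z ∈ Finset.range (n+1),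
      ((1 + (-1:ℝ)^(n - z)) / 2^(2*n+2)) * ((2*n+2).choose z)
      = ((2:ℝ)^(2*n+2))⁻¹ * ((2*n+2).choose z)
        + ((2:ℝ)^(2*n+2))⁻¹ * (-1)^n * ((-1)^z * ((2*n+2).choose z)) := by
    intro z hz
    have hz' : z ≤ n := Nat.lt_succ_iff.mp (Finset.mem_range.mp hz)
    have h : (-1:ℝ)^(n-z) * (-1)^z = (-1)^n := by
      rw [← pow_add, Nat.sub_add_cancel hz']
    have h2 : (-1:ℝ)^(n-z) = (-1)^n * (-1)^z := by
      rw [← h, mul_assoc, ← mul_pow]; norm_num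
    rw [h2]; ring
  rw [Finset.sum_congr rfl key, Finset.sum_add_distrib, ← Finset.mul_sum, ← Finset.mul_sum,
    plain_sum]
  have ha : ∑ z ∈ Finset.range (n+1), (-1:ℝ)^z * ((2*n+2).choose z)
      = (-1)^n * ((2*n+1).choose n) := by
    have := alt_sum (2*n+1) n
    convert this using 4
  rw [ha]
  have h1 : ((-1:ℝ)^n) * ((-1:ℝ)^n) = 1 := by rw [← mul_pow]; norm_num
  have h2 : (2:ℝ)^(2*n+2) = 4 * 4^n := by
    rw [pow_add, pow_mul]; norm_num; ring
  rw [h2]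
  field_simp
  linear_combination (2 * ((2*n+1).choose n : ℝ)) * h1
end

section
/- For all integers x ≥ 1, y ≥ 1, m ≥ 1, it holds that G(x, y, m) = (1/2)·(G(x-1, y+1, m-1) + G(x+1, y-1, m-1)). -/
open MeasureTheory Filter

noncomputable def ibn (N m : ℕ) : ℝ :=
  ∑ z ∈ Finset.range (N + 1), ((1 + (-1 : ℝ) ^ (N - z)) / 2 ^ m) * (m.choose z)

lemma Ib_neg (n : ℤ) (m : ℕ) (h : n < 0) : Ib n m = 0 := by
  unfold Ib
  rw [show (n + 1).toNat = 0 from by omega]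
  simp

lemma Ib_eq_ibn (n : ℤ) (h : 0 ≤ n) (m : ℕ) : Ib n m = ibn n.toNat m := by
  unfold Ib ibn
  rw [show (n + 1).toNat = n.toNat + 1 from by omega]

lemma claimA (N m : ℕ) :
    ibn (N + 1) m + ibn N m = (2 / 2 ^ m) * ∑ z ∈ Finset.range (N + 2), (m.choose z : ℝ) := by
  unfold ibn
  rw [show N + 1 + 1 = N + 2 from rfl, Finset.sum_range_succ (n := N + 1)]
  rw [Finset.sum_range_succ (n := N + 1) (f := fun z => (m.choose z : ℝ))]
  rw [mul_add, Finset.mul_sum]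
  rw [add_right_comm, ← Finset.sum_add_distrib]
  have key : ∀ z ∈ Finset.range (N + 1),
      ((1 + (-1 : ℝ) ^ (N + 1 - z)) / 2 ^ m) * (m.choose z)
        + ((1 + (-1 : ℝ) ^ (N - z)) / 2 ^ m) * (m.choose z)
      = 2 / 2 ^ m * (m.choose z) := by
    intro z hz
    simp only [Finset.mem_range] at hz
    rw [show N + 1 - z = (N - z) + 1 from by omega, pow_succ]
    ring
  rw [Finset.sum_congr rfl key, Nat.sub_self]
  norm_num

lemma chooseSum (N m : ℕ) :
    ∑ z ∈ Finset.range (N + 2), ((m + 1).choose z : ℝ)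
      = ∑ z ∈ Finset.range (N + 2), (m.choose z : ℝ)
        + ∑ z ∈ Finset.range (N + 1), (m.choose z : ℝ) := by
  rw [Finset.sum_range_succ' (f := fun z => ((m + 1).choose z : ℝ))]
  simp only [Nat.choose_succ_succ, Nat.choose_zero_right, Nat.cast_add, Nat.cast_one]
  rw [Finset.sum_add_distrib]
  rw [Finset.sum_range_succ' (f := fun z => (m.choose z : ℝ)) (n := N + 1)]
  simp only [Nat.choose_zero_right, Nat.cast_one]
  ring

lemma claimB (N m : ℕ) :
    ibn N (m + 1) = (1 / 2 ^ m) * ∑ z ∈ Finset.range (N + 1), (m.choose z : ℝ) := by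
  induction N with
  | zero => simp [ibn]; ring
  | succ N ih =>
      have hA := claimA N (m + 1)
      rw [ih] at hA
      have : ibn (N + 1) (m + 1)
          = 2 / 2 ^ (m + 1) * ∑ z ∈ Finset.range (N + 2), ((m + 1).choose z : ℝ)
            - 1 / 2 ^ m * ∑ z ∈ Finset.range (N + 1), (m.choose z : ℝ) := by
        linarith
      rw [this, chooseSum]
      rw [pow_succ]
      ring

lemma Ib_pascal (n : ℤ) (m : ℕ) : Ib n (m + 1) = (Ib n m + Ib (n - 1) m) / 2 := by
  rcases lt_trichotomy n 0 with h | h | h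
  · rw [Ib_neg _ _ h, Ib_neg _ _ h, Ib_neg _ _ (by omega)]
    norm_num
  · subst h
    rw [Ib_eq_ibn _ le_rfl, Ib_eq_ibn _ le_rfl, Ib_neg _ _ (by omega)]
    norm_num [ibn]
    rw [pow_succ]
    ring
  · have h0 : (0:ℤ) ≤ n := by omega
    have h1 : (0:ℤ) ≤ n - 1 := by omega
    rw [Ib_eq_ibn _ h0, Ib_eq_ibn _ h0, Ib_eq_ibn _ h1]
    obtain ⟨N, hN⟩ : ∃ N, n.toNat = N + 1 := ⟨n.toNat - 1, by omega⟩
    rw [hN, show (n - 1).toNat = N from by omega]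
    rw [claimB, claimA]
    ring

lemma Ib_pascal' (n M : ℤ) (hM : 1 ≤ M) :
    Ib n (M + 1).toNat = (Ib n M.toNat + Ib (n - 1) M.toNat) / 2 := by
  rw [show (M + 1).toNat = M.toNat + 1 from by omega, Ib_pascal]

lemma div_pred (d c : ℕ) (hd : 1 ≤ d) (hc : 1 ≤ c) : (d * c - 1) / d = c - 1 := by
  obtain ⟨c', rfl⟩ : ∃ c', c = c' + 1 := ⟨c - 1, by omega⟩
  rw [show d * (c' + 1) - 1 = (d - 1) + d * c' from by
        have : d * (c' + 1) = d * c' + d := by ring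
        omega]
  rw [Nat.add_mul_div_left _ _ (by omega : 0 < d), Nat.div_eq_of_lt (by omega)]
  omega

lemma term_pascal (a b M n : ℕ) :
    2 * Ib (((M:ℤ) + 1 - ((a:ℤ) + 1)) / 2 - ((a:ℤ) + 1 + ((b:ℤ) + 1)) * n)
        (2 * (((M:ℤ) + 1 - ((a:ℤ) + 1)) / 2) + ((a:ℤ) + 1) + 2).toNat -
      2 * Ib (((M:ℤ) + 1 - ((a:ℤ) + 1)) / 2 - ((b:ℤ) + 1) - ((a:ℤ) + 1 + ((b:ℤ) + 1)) * n)
        (2 * (((M:ℤ) + 1 - ((a:ℤ) + 1)) / 2) + ((a:ℤ) + 1) + 2).toNat +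
      2 * Ib (((M:ℤ) + 1 - ((b:ℤ) + 1)) / 2 - ((a:ℤ) + 1 + ((b:ℤ) + 1)) * n)
        (2 * (((M:ℤ) + 1 - ((b:ℤ) + 1)) / 2) + ((b:ℤ) + 1) + 2).toNat -
      2 * Ib (((M:ℤ) + 1 - ((b:ℤ) + 1)) / 2 - ((a:ℤ) + 1) - ((a:ℤ) + 1 + ((b:ℤ) + 1)) * n)
        (2 * (((M:ℤ) + 1 - ((b:ℤ) + 1)) / 2) + ((b:ℤ) + 1) + 2).toNat
    = 1 / 2 *
      ((2 * Ib (((M:ℤ) - (a:ℤ)) / 2 - ((a:ℤ) + ((b:ℤ) + 1 + 1)) * n)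
          (2 * (((M:ℤ) - (a:ℤ)) / 2) + (a:ℤ) + 2).toNat -
        2 * Ib (((M:ℤ) - (a:ℤ)) / 2 - ((b:ℤ) + 1 + 1) - ((a:ℤ) + ((b:ℤ) + 1 + 1)) * n)
          (2 * (((M:ℤ) - (a:ℤ)) / 2) + (a:ℤ) + 2).toNat +
        2 * Ib (((M:ℤ) - ((b:ℤ) + 1 + 1)) / 2 - ((a:ℤ) + ((b:ℤ) + 1 + 1)) * n)
          (2 * (((M:ℤ) - ((b:ℤ) + 1 + 1)) / 2) + ((b:ℤ) + 1 + 1) + 2).toNat -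
        2 * Ib (((M:ℤ) - ((b:ℤ) + 1 + 1)) / 2 - (a:ℤ) - ((a:ℤ) + ((b:ℤ) + 1 + 1)) * n)
          (2 * (((M:ℤ) - ((b:ℤ) + 1 + 1)) / 2) + ((b:ℤ) + 1 + 1) + 2).toNat) +
       (2 * Ib (((M:ℤ) - ((a:ℤ) + 1 + 1)) / 2 - ((a:ℤ) + 1 + 1 + (b:ℤ)) * n)
          (2 * (((M:ℤ) - ((a:ℤ) + 1 + 1)) / 2) + ((a:ℤ) + 1 + 1) + 2).toNat -
        2 * Ib (((M:ℤ) - ((a:ℤ) + 1 + 1)) / 2 - (b:ℤ) - ((a:ℤ) + 1 + 1 + (b:ℤ)) * n)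
          (2 * (((M:ℤ) - ((a:ℤ) + 1 + 1)) / 2) + ((a:ℤ) + 1 + 1) + 2).toNat +
        2 * Ib (((M:ℤ) - (b:ℤ)) / 2 - ((a:ℤ) + 1 + 1 + (b:ℤ)) * n)
          (2 * (((M:ℤ) - (b:ℤ)) / 2) + (b:ℤ) + 2).toNat -
        2 * Ib (((M:ℤ) - (b:ℤ)) / 2 - ((a:ℤ) + 1 + 1) - ((a:ℤ) + 1 + 1 + (b:ℤ)) * n)
          (2 * (((M:ℤ) - (b:ℤ)) / 2) + (b:ℤ) + 2).toNat)) := by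
  have e1 : ((M:ℤ) + 1 - ((a:ℤ) + 1)) = (M:ℤ) - a := by ring
  have e1' : ((M:ℤ) + 1 - ((b:ℤ) + 1)) = (M:ℤ) - b := by ring
  have e2 : ((M:ℤ) - ((b:ℤ) + 1 + 1)) / 2 = ((M:ℤ) - b) / 2 - 1 := by omega
  have e3 : ((M:ℤ) - ((a:ℤ) + 1 + 1)) / 2 = ((M:ℤ) - a) / 2 - 1 := by omega
  have eS1 : ((a:ℤ) + 1 + ((b:ℤ) + 1)) = (a:ℤ) + b + 2 := by ring
  have eS2 : ((a:ℤ) + ((b:ℤ) + 1 + 1)) = (a:ℤ) + b + 2 := by ring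
  have eS3 : ((a:ℤ) + 1 + 1 + (b:ℤ)) = (a:ℤ) + b + 2 := by ring
  rw [e1, e1', e2, e3, eS1, eS2, eS3]
  have hdA : 2 * (((M:ℤ) - a) / 2) ≤ (M:ℤ) - a ∧ (M:ℤ) - a < 2 * (((M:ℤ) - a) / 2) + 2 := by omega
  have hdB : 2 * (((M:ℤ) - b) / 2) ≤ (M:ℤ) - b ∧ (M:ℤ) - b < 2 * (((M:ℤ) - b) / 2) + 2 := by omega
  set A : ℤ := ((M:ℤ) - a) / 2 with hA
  set B : ℤ := ((M:ℤ) - b) / 2 with hB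
  have hEA : (1:ℤ) ≤ 2 * A + (a:ℤ) + 2 := by omega
  have hEB : (1:ℤ) ≤ 2 * B + (b:ℤ) + 2 := by omega
  rw [show (2 * A + ((a:ℤ) + 1) + 2) = (2 * A + (a:ℤ) + 2) + 1 from by ring]
  rw [show (2 * B + ((b:ℤ) + 1) + 2) = (2 * B + (b:ℤ) + 2) + 1 from by ring]
  rw [show (2 * (B - 1) + ((b:ℤ) + 1 + 1) + 2) = 2 * B + (b:ℤ) + 2 from by ring]
  rw [show (2 * (A - 1) + ((a:ℤ) + 1 + 1) + 2) = 2 * A + (a:ℤ) + 2 from by ring]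
  rw [Ib_pascal' (A - ((a:ℤ) + b + 2) * n) _ hEA,
      Ib_pascal' (A - ((b:ℤ) + 1) - ((a:ℤ) + b + 2) * n) _ hEA,
      Ib_pascal' (B - ((a:ℤ) + b + 2) * n) _ hEB,
      Ib_pascal' (B - ((a:ℤ) + 1) - ((a:ℤ) + b + 2) * n) _ hEB]
  rw [show A - ((a:ℤ) + b + 2) * n - 1 = A - 1 - ((a:ℤ) + b + 2) * n from by ring]
  rw [show A - ((b:ℤ) + 1) - ((a:ℤ) + b + 2) * n - 1
        = A - ((b:ℤ) + 1 + 1) - ((a:ℤ) + b + 2) * n from by ring]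
  rw [show B - ((a:ℤ) + b + 2) * n - 1 = B - 1 - ((a:ℤ) + b + 2) * n from by ring]
  rw [show B - ((a:ℤ) + 1) - ((a:ℤ) + b + 2) * n - 1
        = B - ((a:ℤ) + 1 + 1) - ((a:ℤ) + b + 2) * n from by ring]
  rw [show A - 1 - (b:ℤ) - ((a:ℤ) + b + 2) * n
        = A - ((b:ℤ) + 1) - ((a:ℤ) + b + 2) * n from by ring]
  rw [show B - 1 - (a:ℤ) - ((a:ℤ) + b + 2) * n
        = B - ((a:ℤ) + 1) - ((a:ℤ) + b + 2) * n from by ring]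
  ring


lemma term_vanish (a b M c : ℕ) (hc : M + 1 = 2 * (a + b + 2) * c) :
    2 * Ib (((M:ℤ) + 1 - ((a:ℤ) + 1)) / 2 - ((a:ℤ) + 1 + ((b:ℤ) + 1)) * c)
        (2 * (((M:ℤ) + 1 - ((a:ℤ) + 1)) / 2) + ((a:ℤ) + 1) + 2).toNat -
      2 * Ib (((M:ℤ) + 1 - ((a:ℤ) + 1)) / 2 - ((b:ℤ) + 1) - ((a:ℤ) + 1 + ((b:ℤ) + 1)) * c)
        (2 * (((M:ℤ) + 1 - ((a:ℤ) + 1)) / 2) + ((a:ℤ) + 1) + 2).toNat +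
      2 * Ib (((M:ℤ) + 1 - ((b:ℤ) + 1)) / 2 - ((a:ℤ) + 1 + ((b:ℤ) + 1)) * c)
        (2 * (((M:ℤ) + 1 - ((b:ℤ) + 1)) / 2) + ((b:ℤ) + 1) + 2).toNat -
      2 * Ib (((M:ℤ) + 1 - ((b:ℤ) + 1)) / 2 - ((a:ℤ) + 1) - ((a:ℤ) + 1 + ((b:ℤ) + 1)) * c)
        (2 * (((M:ℤ) + 1 - ((b:ℤ) + 1)) / 2) + ((b:ℤ) + 1) + 2).toNat = 0 := by
  have hcz : (M:ℤ) + 1 = 2 * ((a:ℤ) + b + 2) * c := by exact_mod_cast hc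
  rw [show ((a:ℤ) + 1 + ((b:ℤ) + 1)) = (a:ℤ) + b + 2 from by ring]
  set p : ℤ := ((a:ℤ) + b + 2) * c with hp
  have hpz : (M:ℤ) + 1 = 2 * p := by rw [hp]; linarith [hcz]
  rw [Ib_neg _ _ (by omega), Ib_neg _ _ (by omega), Ib_neg _ _ (by omega),
      Ib_neg _ _ (by omega)]
  ring


theorem G_recurrence (x y m : ℕ) (hx : 1 ≤ x) (hy : 1 ≤ y) (hm : 1 ≤ m) :
    Gfun x y m = (1 / 2) * (Gfun (x - 1) (y + 1) (m - 1) + Gfun (x + 1) (y - 1) (m - 1)) := by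
  obtain ⟨a, rfl⟩ : ∃ a, x = a + 1 := ⟨x - 1, by omega⟩
  obtain ⟨b, rfl⟩ : ∃ b, y = b + 1 := ⟨y - 1, by omega⟩
  obtain ⟨M, rfl⟩ : ∃ M, m = M + 1 := ⟨m - 1, by omega⟩
  simp only [Gfun, Nat.add_sub_cancel]
  rw [if_neg (by omega), if_neg (by omega), if_neg (by omega)]
  push_cast
  rw [show a + 1 + (b + 1) = a + b + 2 from by omega,
      show a + (b + 1 + 1) = a + b + 2 from by omega,
      show a + 1 + 1 + b = a + b + 2 from by omega]
  rw [Nat.succ_div]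
  by_cases hdvd : 2 * (a + b + 2) ∣ M + 1
  · obtain ⟨c, hc⟩ := hdvd
    have hc1 : 1 ≤ c := by rcases c with _ | c <;> omega
    have hM : M / (2 * (a + b + 2)) = c - 1 := by
      rw [show M = 2 * (a + b + 2) * c - 1 from by omega]
      exact div_pred _ _ (by omega) hc1
    rw [if_pos ⟨c, hc⟩, hM]
    rw [show c - 1 + 1 + 1 = (c - 1 + 1) + 1 from rfl, Finset.sum_range_succ]
    rw [show c - 1 + 1 = c from by omega]
    rw [term_vanish a b M c hc, add_zero]
    rw [← Finset.sum_add_distrib, Finset.mul_sum]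
    exact Finset.sum_congr rfl fun n _ => term_pascal a b M n
  · rw [if_neg hdvd, add_zero]
    rw [← Finset.sum_add_distrib, Finset.mul_sum]
    exact Finset.sum_congr rfl fun n _ => term_pascal a b M n
end
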